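/- Let G be a connected k-regular finite simple graph on n vertices whose adjacency matrix has exactly four distinct eigenvalues λ_0 = k, λ_1, λ_2, λ_3. Then for every vertex x of G, the average degree of the subgraph G_x induced on the neighbours of x equals λ_1 + λ_2 + λ_3 + (λ_1 λ_2 λ_3)/k + ((k - λ_1)(k - λ_2)(k - λ_3))/(nk). -/

import Mathlib

open SimpleGraph

/-- The average degree of the local graph `G_x`, the subgraph of `G` induced on the
neighbours of `x`: the sum over neighbours `y` of `x` of the number of neighbours of `y`
inside `N(x)`, divided by the number of neighbours of `x`. -/
noncomputable def avgDegLocal {V : Type*} [Fintype V] [DecidableEq V] (G : SimpleGraph V)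
    [DecidableRel G.Adj] (x : V) : ℝ :=
  (∑ y ∈ G.neighborFinset x, (((G.neighborFinset x).filter (fun z => G.Adj y z)).card : ℝ)) /
    (G.degree x)

/-!
Let `p(t) = (t - λ₁)(t - λ₂)(t - λ₃)`. Since `p` vanishes on every eigenvalue other than `k`,
`(A - k) p(A) = 0`, so each column of `p(A)` is a `k`-eigenvector of `A`, hence constant because
`G` is connected and `k`-regular; as `p(A)` is symmetric, `p(A) = (p(k)/n) J` (Hoffman).
Comparing diagonal entries, with `(A³)ₓₓ = 2 |E(Gₓ)|`, `(A²)ₓₓ = k` and `Aₓₓ = 0`, gives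
`2 |E(Gₓ)| = k (λ₁ + λ₂ + λ₃) + λ₁λ₂λ₃ + p(k)/n`.
-/

open Matrix Polynomial
open scoped Finset

lemma IsSelfAdjoint.aeval_eq_zero_of_forall_eval_eq_zero {A : Type*} [Ring A] [StarRing A]
    [Algebra ℝ A] [TopologicalSpace A] [ContinuousFunctionalCalculus ℝ A IsSelfAdjoint]
    {a : A} (ha : IsSelfAdjoint a) {q : ℝ[X]} (hq : ∀ μ ∈ spectrum ℝ a, q.eval μ = 0) :
    aeval a q = 0 := by
  rw [← cfc_polynomial q a ha, cfc_congr (g := 0) hq, cfc_zero]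

lemma IsSelfAdjoint.aeval {A : Type*} [Ring A] [StarRing A]
    [Algebra ℝ A] [TopologicalSpace A] [ContinuousFunctionalCalculus ℝ A IsSelfAdjoint]
    {a : A} (ha : IsSelfAdjoint a) (q : ℝ[X]) : IsSelfAdjoint (aeval a q) :=
  cfc_polynomial q a ha ▸ cfc_predicate _ a

lemma Matrix.aeval_mulVec_of_mulVec_eq_smul {R n : Type*} [CommRing R] [Fintype n]
    [DecidableEq n] {A : Matrix n n R} {v : n → R} {μ : R} (h : A *ᵥ v = μ • v) (p : R[X]) :
    aeval A p *ᵥ v = p.eval μ • v := by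
  rw [← toLinAlgEquiv'_apply, ← aeval_algHom_apply toLinAlgEquiv' A p]
  exact Module.End.aeval_apply_of_mem_apply_eq_smul (by rwa [toLinAlgEquiv'_apply])

lemma Polynomial.aeval_X_sub_C_mul_X_sub_C_mul_X_sub_C {R A : Type*} [CommRing R] [Ring A]
    [Algebra R A] (a : A) (l₁ l₂ l₃ : R) :
    aeval a ((X - C l₁) * (X - C l₂) * (X - C l₃)) =
      a ^ 3 - (l₁ + l₂ + l₃) • a ^ 2 + (l₁ * l₂ + l₁ * l₃ + l₂ * l₃) • a - (l₁ * l₂ * l₃) • 1 := by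
  simp only [map_mul, map_sub, aeval_X, aeval_C, Algebra.algebraMap_eq_smul_one, sub_mul, mul_sub,
    smul_mul_assoc, mul_smul_comm, one_mul, mul_one, smul_smul, pow_succ, pow_zero]
  module

namespace SimpleGraph

variable {V : Type*} [Fintype V] {G : SimpleGraph V} [DecidableRel G.Adj] {k : ℕ}

lemma IsRegularOfDegree.adjMatrix_eq_zero {α : Type*} [Zero α] [One α]
    (hreg : G.IsRegularOfDegree 0) : G.adjMatrix α = 0 := by
  ext i j
  simp only [adjMatrix_apply, Matrix.zero_apply, ite_eq_right_iff]
  exact fun h => absurd (hreg i) h.degree_pos_left.ne'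

lemma IsRegularOfDegree.adjMatrix_mulVec_one {α : Type*} [NonAssocSemiring α]
    (hreg : G.IsRegularOfDegree k) : G.adjMatrix α *ᵥ 1 = (k : α) • 1 := by
  ext i
  simp [hreg i]

variable [DecidableEq V]

lemma Connected.apply_eq_of_adjMatrix_mulVec_eq_smul (hconn : G.Connected)
    (hreg : G.IsRegularOfDegree k) {v : V → ℝ} (hv : G.adjMatrix ℝ *ᵥ v = (k : ℝ) • v)
    (i j : V) : v i = v j := by
  have hlap : G.lapMatrix ℝ *ᵥ v = 0 := by
    ext a
    have := congrFun hv a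
    rw [adjMatrix_mulVec_apply] at this
    simp [lapMatrix_mulVec_apply, hreg a, this]
  exact (G.lapMatrix_mulVec_eq_zero_iff_forall_reachable.mp hlap) i j (hconn i j)

lemma Connected.aeval_adjMatrix_apply (hconn : G.Connected)
    (hreg : G.IsRegularOfDegree k) {p : ℝ[X]}
    (hp : ∀ μ ∈ spectrum ℝ (G.adjMatrix ℝ), μ ≠ k → p.eval μ = 0) (i j : V) :
    aeval (G.adjMatrix ℝ) p i j = p.eval (k : ℝ) / Fintype.card V := by
  set A := G.adjMatrix ℝ
  set M := aeval A p
  have hA : IsSelfAdjoint A := isHermitian_iff_isSelfAdjoint.mp G.isSymm_adjMatrix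
  have hAM : A * M = (k : ℝ) • M := by
    have := hA.aeval_eq_zero_of_forall_eval_eq_zero
      (q := (X - C (k : ℝ)) * p) fun μ hμ => by
        by_cases hμk : μ = k
        · simp [hμk]
        · simp [hp μ hμ hμk]
    rwa [map_mul, map_sub, aeval_X, aeval_C, sub_mul, sub_eq_zero, Algebra.algebraMap_eq_smul_one,
      smul_mul_assoc, one_mul] at this
  have hcol : ∀ a b c, M a c = M b c := fun a b c =>
    hconn.apply_eq_of_adjMatrix_mulVec_eq_smul hreg (v := fun a => M a c)
      (funext fun a => congrFun₂ hAM a c) a b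
  have hsymm : ∀ a b, M a b = M b a := fun a b =>
    (star_trivial _).symm.trans ((isHermitian_iff_isSelfAdjoint.mpr (hA.aeval p)).apply b a)
  have hrow : ∀ b, M i b = M i j := fun b => by rw [hcol i j b, hsymm j b, hcol b i j]
  have hsum : (M *ᵥ 1) i = p.eval (k : ℝ) := by
    rw [Matrix.aeval_mulVec_of_mulVec_eq_smul hreg.adjMatrix_mulVec_one p]
    simp
  have : Nonempty V := ⟨i⟩
  rw [eq_div_iff (by positivity), ← hsum]
  simp [mulVec, dotProduct, hrow, mul_comm]

lemma adjMatrix_pow_three_apply_self {α : Type*} [Semiring α] (x : V) :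
    (G.adjMatrix α ^ 3) x x =
      ∑ y ∈ G.neighborFinset x, (#{z ∈ G.neighborFinset x | G.Adj y z} : α) := by
  rw [pow_three, adjMatrix_mul_apply]
  refine Finset.sum_congr rfl fun y _ => ?_
  rw [adjMatrix_mul_apply]
  simp only [adjMatrix_apply, Finset.sum_boole]
  congr 2
  ext z
  simp only [Finset.mem_filter, mem_neighborFinset, G.adj_comm z x]
  tauto

end SimpleGraph

theorem four_distinct_eigenvalues_local_average_degree_general {V : Type*} [Fintype V] [DecidableEq V]
    (G : SimpleGraph V) [DecidableRel G.Adj] (k : ℕ) (l₁ l₂ l₃ : ℝ)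
    (hconn : G.Connected) (hreg : G.IsRegularOfDegree k)
    (hspec : spectrum ℝ (G.adjMatrix ℝ) = {(k : ℝ), l₁, l₂, l₃}) :
    ∀ x : V, avgDegLocal G x =
      l₁ + l₂ + l₃ + l₁ * l₂ * l₃ / k +
        ((k : ℝ) - l₁) * ((k : ℝ) - l₂) * ((k : ℝ) - l₃) / ((Fintype.card V : ℝ) * k) := by
  intro x
  obtain rfl | hk := eq_or_ne k 0
  · -- both sides are divisions by `0`; the spectrum `{0}` of the zero matrix forces `lᵢ = 0`
    have : Nonempty V := hconn.nonempty
    rw [hreg.adjMatrix_eq_zero, spectrum.zero_eq] at hspec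
    obtain ⟨rfl, rfl, rfl⟩ : l₁ = 0 ∧ l₂ = 0 ∧ l₃ = 0 := by
      simpa [Set.insert_subset_iff] using hspec.ge
    simp [avgDegLocal, hreg x]
  have hdiag := hconn.aeval_adjMatrix_apply hreg (p := (X - C l₁) * (X - C l₂) * (X - C l₃))
    (fun μ hμ hμk => by
      rw [hspec] at hμ
      rcases hμ with h | h | h | h <;> simp_all) x x
  simp only [aeval_X_sub_C_mul_X_sub_C_mul_X_sub_C, Matrix.sub_apply, Matrix.add_apply,
    Matrix.smul_apply, smul_eq_mul, Matrix.one_apply_eq, mul_one, adjMatrix_pow_three_apply_self,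
    pow_two, adjMatrix_mul_self_apply_self, hreg x, adjMatrix_apply, G.irrefl, if_false, eval_mul,
    eval_sub, eval_X, eval_C] at hdiag
  rw [avgDegLocal, hreg x]
  field_simp
  linear_combination hdiag

theorem four_distinct_eigenvalues_local_average_degree {V : Type*} [Fintype V] [DecidableEq V]
    (G : SimpleGraph V) [DecidableRel G.Adj] (k : ℕ) (l₁ l₂ l₃ : ℝ)
    (hconn : G.Connected) (hreg : G.IsRegularOfDegree k)
    (hspec : spectrum ℝ (G.adjMatrix ℝ) = {(k : ℝ), l₁, l₂, l₃})
    (hdist : List.Pairwise (· ≠ ·) [(k : ℝ), l₁, l₂, l₃]) :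
    ∀ x : V, avgDegLocal G x =
      l₁ + l₂ + l₃ + l₁ * l₂ * l₃ / k +
        ((k : ℝ) - l₁) * ((k : ℝ) - l₂) * ((k : ℝ) - l₃) / ((Fintype.card V : ℝ) * k) :=
  four_distinct_eigenvalues_local_average_degree_general G k l₁ l₂ l₃ hconn hreg hspec
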